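/- arXiv:1204.1147 — 6 statements merged into one kernel-verified Lean document; each statement's English description precedes it below -/
import Mathlib

section
/- Let f : ℝⁿ → ℝⁿ be a monotone partial function whose domain is upward closed, let x ∈ dom(f) with f(x) = x, and let k ∈ ℕ. Assume that for every ε > 0 there exists a unit vector d_ε ≫ 0 (with respect to the maximum norm) such that fᵏ(x + λ·d_ε) ≪ x + λ·d_ε for all λ ≥ ε. Then every y with y ≤ f(y) satisfies y ≤ x, i.e., x is the greatest pre-fixpoint of f. -/
/-! If a pre-fixpoint `y` were not below `x`, push `x` along a direction `d ≫ 0` until the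
translate `z = x + λ • d` first dominates `y`; then `z` and `y` agree in some coordinate `i₀`.
Monotonicity gives `y ≤ fᵏ y ≤ fᵏ z`, while `fᵏ z ≪ z`, so `y i₀ < z i₀ = y i₀`. The unit norm
of `d` ensures `λ ≥ ε`, so the hypothesis on `d` applies at `z`. -/

open Set

namespace MonotoneOn

variable {α : Type*} [Preorder α] {f : α → α} {D : Set α}

theorem iterate_le_iterate (hf : MonotoneOn f D) (hD : MapsTo f D D) {a b : α}
    (ha : a ∈ D) (hb : b ∈ D) (hab : a ≤ b) (m : ℕ) : f^[m] a ≤ f^[m] b := by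
  induction m with
  | zero => exact hab
  | succ m ih =>
    rw [Function.iterate_succ_apply', Function.iterate_succ_apply']
    exact hf (hD.iterate m ha) (hD.iterate m hb) ih

theorem le_iterate_of_le_apply (hf : MonotoneOn f D) (hD : MapsTo f D D) {y : α}
    (hy : y ∈ D) (hpre : y ≤ f y) (m : ℕ) : y ≤ f^[m] y := by
  induction m with
  | zero => exact le_rfl
  | succ m ih =>
    calc y ≤ f^[m] y := ih
      _ ≤ f^[m] (f y) := hf.iterate_le_iterate hD hy (hD hy) hpre m
      _ = f^[m + 1] y := (Function.iterate_succ_apply f m y).symm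

end MonotoneOn

theorem exists_le_add_smul_apply_eq {ι : Type*} [Finite ι] {x y d : ι → ℝ}
    (hd : ∀ j, 0 < d j) (hd₁ : ∀ j, d j ≤ 1) {i : ι} (hi : x i ≤ y i) :
    ∃ lam, y i - x i ≤ lam ∧ y ≤ x + lam • d ∧ ∃ i₀, (x + lam • d) i₀ = y i₀ := by
  have : Nonempty ι := ⟨i⟩
  obtain ⟨i₀, hi₀⟩ := Finite.exists_max fun j => (y j - x j) / d j
  refine ⟨(y i₀ - x i₀) / d i₀, ?_, fun j => ?_, i₀, ?_⟩
  · exact (le_div_self (sub_nonneg.2 hi) (hd i) (hd₁ i)).trans (hi₀ i)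
  · have := (div_le_iff₀ (hd j)).1 (hi₀ j)
    simp only [Pi.add_apply, Pi.smul_apply, smul_eq_mul]
    linarith
  · simp [div_mul_cancel₀ _ (hd i₀).ne']

theorem greatest_prefixpoint_of_directions_general {n : ℕ}
    (f : (Fin n → ℝ) → (Fin n → ℝ)) (D : Set (Fin n → ℝ))
    (hDclosed : ∀ a ∈ D, f a ∈ D)
    (hmono : ∀ a ∈ D, ∀ b ∈ D, a ≤ b → f a ≤ f b)
    (x : Fin n → ℝ) (k : ℕ)
    (hdir : ∀ ε : ℝ, 0 < ε → ∃ d : Fin n → ℝ, ‖d‖ = 1 ∧ (∀ i, 0 < d i) ∧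
      ∀ lam : ℝ, ε ≤ lam →
        x + lam • d ∈ D ∧ ∀ i, (f^[k] (x + lam • d)) i < (x + lam • d) i) :
    ∀ y ∈ D, y ≤ f y → y ≤ x := by
  have hf : MonotoneOn f D := fun a ha b hb => hmono a ha b hb
  intro y hy hpre
  by_contra hyx
  obtain ⟨i, hi⟩ : ∃ i, x i < y i := by simpa [Pi.le_def] using hyx
  obtain ⟨d, hd_norm, hd_pos, hd_dir⟩ := hdir (y i - x i) (sub_pos.2 hi)
  have hd₁ : ∀ j, d j ≤ 1 := fun j =>
    (Real.le_norm_self _).trans (hd_norm ▸ norm_le_pi_norm d j)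
  obtain ⟨lam, hlam, hyz, i₀, hz⟩ := exists_le_add_smul_apply_eq hd_pos hd₁ hi.le
  obtain ⟨hzD, hz_desc⟩ := hd_dir lam hlam
  have hyfz : y ≤ f^[k] (x + lam • d) :=
    (hf.le_iterate_of_le_apply hDclosed hy hpre k).trans
      (hf.iterate_le_iterate hDclosed hy hzD hyz k)
  exact (hyfz i₀).not_gt (hz ▸ hz_desc i₀)

/-- Sufficient criterion for a fixpoint of a monotone partial
operator on ℝⁿ (modeled by a total function `f` together with its domain `D`)
to be the greatest pre-fixpoint.  The norm `‖·‖` on `Fin n → ℝ` is the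
maximum norm. -/
theorem greatest_prefixpoint_of_directions {n : ℕ}
    (f : (Fin n → ℝ) → (Fin n → ℝ)) (D : Set (Fin n → ℝ))
    (hDup : ∀ a ∈ D, ∀ b, a ≤ b → b ∈ D)
    (hDclosed : ∀ a ∈ D, f a ∈ D)
    (hmono : ∀ a ∈ D, ∀ b ∈ D, a ≤ b → f a ≤ f b)
    (x : Fin n → ℝ) (hx : x ∈ D) (hfix : f x = x) (k : ℕ)
    (hdir : ∀ ε : ℝ, 0 < ε → ∃ d : Fin n → ℝ, ‖d‖ = 1 ∧ (∀ i, 0 < d i) ∧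
      ∀ lam : ℝ, ε ≤ lam →
        x + lam • d ∈ D ∧ ∀ i, (f^[k] (x + lam • d)) i < (x + lam • d) i) :
    ∀ y ∈ D, y ≤ f y → y ≤ x :=
  greatest_prefixpoint_of_directions_general f D hDclosed hmono x k hdir
end

section
/- Let f : ℝⁿ → ℝⁿ be a monotone partial function with upward closed domain, x ∈ dom(f) a fixpoint of f, and k ∈ ℕ. Suppose there exists a single unit vector d ≫ 0 such that fᵏ(x + λ·d) ≪ x + λ·d for all λ > 0. Then x is the greatest pre-fixpoint of f, i.e., y ≤ f(y) implies y ≤ x. -/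
/-! Let `y ∈ D` with `y ≤ f y`, and suppose `y ≰ x`. Take the least `c` with `y ≤ x + c • d`;
then `c > 0` and `x + c • d` touches `y` in some coordinate `i`. Monotonicity of the iterates
gives `y ≤ fᵏ y ≤ fᵏ (x + c • d) ≪ x + c • d`, which is strict in coordinate `i`: a contradiction. -/

open Set Function

theorem MonotoneOn.iterate {α : Type*} [Preorder α] {f : α → α} {s : Set α}
    (hf : MonotoneOn f s) (hs : MapsTo f s s) : ∀ m, MonotoneOn f^[m] s
  | 0 => monotoneOn_id
  | m + 1 => fun _ ha _ hb hab => by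
      simp only [iterate_succ_apply]
      exact hf.iterate hs m (hs ha) (hs hb) (hf ha hb hab)

theorem MonotoneOn.le_iterate_of_le_apply_s2 {α : Type*} [Preorder α] {f : α → α} {s : Set α}
    (hf : MonotoneOn f s) (hs : MapsTo f s s) {y : α} (hy : y ∈ s) (hle : y ≤ f y) :
    ∀ m, y ≤ f^[m] y
  | 0 => le_rfl
  | m + 1 =>
    calc y ≤ f^[m] y := hf.le_iterate_of_le_apply_s2 hs hy hle m
      _ ≤ f^[m] (f y) := hf.iterate hs m hy (hs hy) hle
      _ = f^[m + 1] y := (iterate_succ_apply f m y).symm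

theorem exists_pos_le_add_smul_eq_of_not_le {ι : Type*} [Finite ι] {x y d : ι → ℝ}
    (hd : ∀ i, 0 < d i) (hyx : ¬y ≤ x) :
    ∃ c > 0, y ≤ x + c • d ∧ ∃ i, y i = x i + c * d i := by
  obtain ⟨j, hj⟩ : ∃ j, x j < y j := by simpa [Pi.le_def] using hyx
  have : Nonempty ι := ⟨j⟩
  obtain ⟨i, hi⟩ := Finite.exists_max fun i => (y i - x i) / d i
  refine ⟨(y i - x i) / d i, (div_pos (sub_pos.2 hj) (hd j)).trans_le (hi j), fun l => ?_, i, ?_⟩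
  · have := (div_le_iff₀ (hd l)).1 (hi l)
    simp only [Pi.add_apply, Pi.smul_apply, smul_eq_mul]
    linarith
  · field_simp [(hd i).ne']
    ring

theorem greatest_prefixpoint_of_single_direction_general {n : ℕ}
    (f : (Fin n → ℝ) → (Fin n → ℝ)) (D : Set (Fin n → ℝ))
    (hDclosed : ∀ a ∈ D, f a ∈ D)
    (hmono : ∀ a ∈ D, ∀ b ∈ D, a ≤ b → f a ≤ f b)
    (x : Fin n → ℝ) (k : ℕ)
    (d : Fin n → ℝ) (hdpos : ∀ i, 0 < d i)
    (hdir : ∀ lam : ℝ, 0 < lam →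
      x + lam • d ∈ D ∧ ∀ i, (f^[k] (x + lam • d)) i < (x + lam • d) i) :
    ∀ y ∈ D, y ≤ f y → y ≤ x := by
  intro y hy hle
  by_contra hyx
  obtain ⟨c, hc, hyc, i, hyi⟩ := exists_pos_le_add_smul_eq_of_not_le hdpos hyx
  obtain ⟨hcD, hlt⟩ := hdir c hc
  have hfD : MapsTo f D D := fun a ha => hDclosed a ha
  have hfmono : MonotoneOn f D := fun a ha b hb => hmono a ha b hb
  have key :=
    calc y i ≤ (f^[k] y) i := hfmono.le_iterate_of_le_apply_s2 hfD hy hle k i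
      _ ≤ (f^[k] (x + c • d)) i := hfmono.iterate hfD k hy hcD hyc i
      _ < (x + c • d) i := hlt i
  simp [hyi] at key

/-- Sufficient criterion for a fixpoint of a monotone partial
operator on ℝⁿ (modeled by a total function `f` together with its domain `D`)
to be the greatest pre-fixpoint, with a single direction `d ≫ 0`.
The norm `‖·‖` on `Fin n → ℝ` is the maximum norm. -/
theorem greatest_prefixpoint_of_single_direction {n : ℕ}
    (f : (Fin n → ℝ) → (Fin n → ℝ)) (D : Set (Fin n → ℝ))
    (hDup : ∀ a ∈ D, ∀ b, a ≤ b → b ∈ D)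
    (hDclosed : ∀ a ∈ D, f a ∈ D)
    (hmono : ∀ a ∈ D, ∀ b ∈ D, a ≤ b → f a ≤ f b)
    (x : Fin n → ℝ) (hx : x ∈ D) (hfix : f x = x) (k : ℕ)
    (d : Fin n → ℝ) (hnorm : ‖d‖ = 1) (hdpos : ∀ i, 0 < d i)
    (hdir : ∀ lam : ℝ, 0 < lam →
      x + lam • d ∈ D ∧ ∀ i, (f^[k] (x + lam • d)) i < (x + lam • d) i) :
    ∀ y ∈ D, y ≤ f y → y ≤ x :=
  greatest_prefixpoint_of_single_direction_general f D hDclosed hmono x k d hdpos hdir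
end

section
/- Let f : ℝⁿ ⇀ ℝⁿ be an order-convex partial function, and let x, x* ∈ dom(f) with f(x*) = x*, x ≫ f(x), and d := x* − x ≫ 0. Then for every λ > 0 with x* + λd ∈ dom(f), it holds that x* + λd ≪ f(x* + λd). -/
/-- A set of vectors is order-convex. -/
def OrderConvexSet {k : ℕ} (S : Set (Fin k → ℝ)) : Prop :=
  ∀ x ∈ S, ∀ y ∈ S, (x ≤ y ∨ y ≤ x) → ∀ t : ℝ, 0 ≤ t → t ≤ 1 →
    t • x + (1 - t) • y ∈ S

/-- Order-convex partial function with domain `D`. -/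
def OrderConvexFnOn {n : ℕ} (f : (Fin n → ℝ) → Fin n → ℝ) (D : Set (Fin n → ℝ)) : Prop :=
  OrderConvexSet D ∧
  ∀ x ∈ D, ∀ y ∈ D, (x ≤ y ∨ y ≤ x) → ∀ t : ℝ, 0 ≤ t → t ≤ 1 →
    f (t • x + (1 - t) • y) ≤ t • f x + (1 - t) • f y

/-! The fixpoint `x*` lies strictly between `x` and `y := x* + λ(x* − x)` on the segment
`[x, y]`, namely `x* = t y + (1 - t) x` with `t = 1/(1 + λ) ∈ (0, 1)`. Convexity along this
segment gives `x* ≤ t f(y) + (1 - t) f(x)`, and `f(x) ≪ x` makes this strict after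
replacing `f(x)` by `x`; cancelling `(1 - t) x` leaves `t y ≪ t f(y)`. -/

theorem inv_one_add_smul_add_smul_sub_add_eq {K E : Type*} [Field K] [AddCommGroup E]
    [Module K E] (a b : E) {c : K} (hc : 1 + c ≠ 0) :
    (1 + c)⁻¹ • (a + c • (a - b)) + (1 - (1 + c)⁻¹) • b = a := by
  have hsub : 1 - (1 + c)⁻¹ = (1 + c)⁻¹ * c := by field_simp; ring
  rw [hsub, mul_smul, ← smul_add, add_assoc, ← smul_add, sub_add_cancel]
  rw [show a + c • a = (1 + c) • a by rw [add_smul, one_smul], inv_smul_smul₀ hc]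

theorem OrderConvexFnOn.lt_apply_of_fixed_combination {n : ℕ}
    {f : (Fin n → ℝ) → Fin n → ℝ} {D : Set (Fin n → ℝ)} (hf : OrderConvexFnOn f D)
    {x y : Fin n → ℝ} (hx : x ∈ D) (hy : y ∈ D) (hxy : x ≤ y) {t : ℝ} (ht0 : 0 < t)
    (ht1 : t < 1) (hfix : f (t • y + (1 - t) • x) = t • y + (1 - t) • x) {i : Fin n}
    (hi : f x i < x i) : y i < f y i := by
  have hconv := hf.2 y hy x hx (Or.inr hxy) t ht0.le ht1.le i
  rw [hfix] at hconv
  simp only [Pi.add_apply, Pi.smul_apply, smul_eq_mul] at hconv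
  have hstrict := mul_lt_mul_of_pos_left hi (sub_pos.2 ht1)
  exact lt_of_mul_lt_mul_left (by linarith) ht0.le

theorem orderConvex_strict_above_fixpoint_general {n : ℕ}
    (f : (Fin n → ℝ) → Fin n → ℝ) (D : Set (Fin n → ℝ))
    (hf : OrderConvexFnOn f D)
    (x xs : Fin n → ℝ) (hx : x ∈ D)
    (hfix : f xs = xs) (hlt : ∀ i, f x i < x i) (hd : ∀ i, 0 < (xs - x) i) :
    ∀ lam : ℝ, 0 < lam → xs + lam • (xs - x) ∈ D →
      ∀ i, (xs + lam • (xs - x)) i < f (xs + lam • (xs - x)) i := by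
  intro lam hlam hy i
  have hdir : 0 ≤ xs - x := fun j => (hd j).le
  have hxy : x ≤ xs + lam • (xs - x) :=
    calc x ≤ xs := sub_nonneg.1 hdir
      _ ≤ xs + lam • (xs - x) := le_add_of_nonneg_right (smul_nonneg hlam.le hdir)
  have hcomb := inv_one_add_smul_add_smul_sub_add_eq xs x (c := lam) (by positivity)
  exact hf.lt_apply_of_fixed_combination (t := (1 + lam)⁻¹) hx hy hxy (by positivity)
    (inv_lt_one_of_one_lt₀ (by linarith)) (by rwa [hcomb]) (hlt i)

/-- If `f` is order-convex, `x* ∈ D` a fixpoint, `x ∈ D` with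
`x ≫ f x` and `d := x* − x ≫ 0`, then `x* + λ·d ≪ f(x* + λ·d)` for all
`λ > 0` with `x* + λ·d ∈ D`. -/
theorem orderConvex_strict_above_fixpoint {n : ℕ}
    (f : (Fin n → ℝ) → Fin n → ℝ) (D : Set (Fin n → ℝ))
    (hf : OrderConvexFnOn f D)
    (x xs : Fin n → ℝ) (hx : x ∈ D) (hxs : xs ∈ D)
    (hfix : f xs = xs) (hlt : ∀ i, f x i < x i) (hd : ∀ i, 0 < (xs - x) i) :
    ∀ lam : ℝ, 0 < lam → xs + lam • (xs - x) ∈ D →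
      ∀ i, (xs + lam • (xs - x)) i < f (xs + lam • (xs - x)) i :=
  orderConvex_strict_above_fixpoint_general f D hf x xs hx hfix hlt hd
end

section
/- Let f : ℝⁿ ⇀ ℝⁿ be an order-concave partial function, and let x, x* ∈ dom(f) with f(x*) = x*, x ≪ f(x), and d := x* − x ≫ 0. Then for every λ > 0 with x* + λd ∈ dom(f), it holds that x* + λd ≫ f(x* + λd). -/
/-- Order-concave partial function with domain `D`. -/
def OrderConcaveFnOn {n : ℕ} (f : (Fin n → ℝ) → Fin n → ℝ) (D : Set (Fin n → ℝ)) : Prop :=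
  OrderConvexSet D ∧
  ∀ x ∈ D, ∀ y ∈ D, (x ≤ y ∨ y ≤ x) → ∀ t : ℝ, 0 ≤ t → t ≤ 1 →
    t • f x + (1 - t) • f y ≤ f (t • x + (1 - t) • y)

/-!
The fixpoint `x*` is the convex combination `t • y + (1 - t) • x` of `x` and the extrapolated
point `y = x* + λ • (x* - x)`, with `t = (1 + λ)⁻¹`. Since `x ≤ y`, order-concavity gives
`t • f y + (1 - t) • f x ≤ f x* = x* = t • y + (1 - t) • x`, and the strict inequality
`x ≪ f x` on the second summand forces `f y ≪ y`.
-/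

section Extrapolation

variable {E : Type*} [AddCommGroup E] [Module ℝ E]

theorem inv_one_add_smul_extrapolate_add (c x : E) {lam : ℝ} (hlam : 0 < lam) :
    (1 + lam)⁻¹ • (c + lam • (c - x)) + (1 - (1 + lam)⁻¹) • x = c := by
  have h : (1 + lam) ≠ 0 := by positivity
  match_scalars <;> field_simp; ring

theorem le_extrapolate [PartialOrder E] [IsOrderedAddMonoid E] [PosSMulMono ℝ E]
    {c x : E} (hxc : x ≤ c) {lam : ℝ} (hlam : 0 ≤ lam) : x ≤ c + lam • (c - x) :=
  hxc.trans (le_add_of_nonneg_right (smul_nonneg hlam (sub_nonneg.2 hxc)))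

end Extrapolation

theorem lt_of_convex_combination_le {𝕜 : Type*} [Field 𝕜] [LinearOrder 𝕜] [IsStrictOrderedRing 𝕜]
    {t a b c d : 𝕜} (ht0 : 0 < t) (ht1 : t < 1)
    (h : t * a + (1 - t) * b ≤ t * c + (1 - t) * d) (hdb : d < b) : a < c := by
  have : (1 - t) * d < (1 - t) * b := mul_lt_mul_of_pos_left hdb (sub_pos.2 ht1)
  exact lt_of_mul_lt_mul_left (by linarith) ht0.le

theorem orderConcave_strict_above_fixpoint_general {n : ℕ}
    (f : (Fin n → ℝ) → Fin n → ℝ) (D : Set (Fin n → ℝ))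
    (hf : OrderConcaveFnOn f D)
    (x xs : Fin n → ℝ) (hx : x ∈ D)
    (hfix : f xs = xs) (hlt : ∀ i, x i < f x i) (hd : ∀ i, 0 < (xs - x) i) :
    ∀ lam : ℝ, 0 < lam → xs + lam • (xs - x) ∈ D →
      ∀ i, f (xs + lam • (xs - x)) i < (xs + lam • (xs - x)) i := by
  intro lam hlam hy i
  set y := xs + lam • (xs - x)
  set t := (1 + lam)⁻¹
  have ht0 : 0 < t := by positivity
  have ht1 : t < 1 := inv_lt_one_of_one_lt₀ (by linarith)
  have hxy : x ≤ y := le_extrapolate (fun j ↦ (sub_pos.1 (hd j)).le) hlam.le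
  have hconc : t • f y + (1 - t) • f x ≤ t • y + (1 - t) • x :=
    calc t • f y + (1 - t) • f x ≤ f (t • y + (1 - t) • x) :=
          hf.2 y hy x hx (Or.inr hxy) t ht0.le ht1.le
      _ = t • y + (1 - t) • x := by rw [inv_one_add_smul_extrapolate_add xs x hlam, hfix]
  exact lt_of_convex_combination_le ht0 ht1 (hconc i) (hlt i)

/-- If `f` is order-concave, `x* ∈ D` a fixpoint, `x ∈ D` with
`x ≪ f x` and `d := x* − x ≫ 0`, then `x* + λ·d ≫ f(x* + λ·d)` for all
`λ > 0` with `x* + λ·d ∈ D`. -/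
theorem orderConcave_strict_above_fixpoint {n : ℕ}
    (f : (Fin n → ℝ) → Fin n → ℝ) (D : Set (Fin n → ℝ))
    (hf : OrderConcaveFnOn f D)
    (x xs : Fin n → ℝ) (hx : x ∈ D) (hxs : xs ∈ D)
    (hfix : f xs = xs) (hlt : ∀ i, x i < f x i) (hd : ∀ i, 0 < (xs - x) i) :
    ∀ lam : ℝ, 0 < lam → xs + lam • (xs - x) ∈ D →
      ∀ i, f (xs + lam • (xs - x)) i < (xs + lam • (xs - x)) i :=
  orderConcave_strict_above_fixpoint_general f D hf x xs hx hfix hlt hd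
end

section
/- Let f : ℝⁿ ⇀ ℝⁿ be monotone and order-concave with upward closed domain. Let x* be a fixpoint of f, and suppose there exists a pre-fixpoint x of f with x ≪ x* such that the least fixpoint of f that is ≥ x equals x*. Then x* is the greatest pre-fixpoint of f: every y ∈ dom(f) with y ≤ f(y) satisfies y ≤ x*. -/
/-! Let `y` be a pre-fixpoint. Then `z = y ⊔ x*` is a pre-fixpoint above `x*`, and it suffices
to show `z ≤ x*`. Extrapolate from `z` through `x*` to `u = x* - δ • (z - x*)`, with `δ > 0` so
small that `x ≤ u` (possible because `x ≪ x*`). Since `x*` lies on the segment from `u` to `z`,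
concavity together with `f x* = x*` and `z ≤ f z` gives `f u ≤ u`. Now `f` maps `[x, u]` into
itself, so by Knaster–Tarski it has a fixpoint `p` there, and leastness of `x*` gives
`x* ≤ p ≤ u`, i.e. `δ • (z - x*) ≤ 0`, i.e. `z ≤ x*`. -/

open Set Filter Topology Function

theorem exists_isFixedPt_mem_Icc_of_monotoneOn {α : Type*} [ConditionallyCompleteLattice α]
    {f : α → α} {a b : α} (hab : a ≤ b) (hf : MonotoneOn f (Icc a b))
    (ha : a ≤ f a) (hb : f b ≤ b) : ∃ p ∈ Icc a b, IsFixedPt f p := by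
  have : Fact (a ≤ b) := ⟨hab⟩
  have hmaps : MapsTo f (Icc a b) (Icc a b) := fun c hc =>
    ⟨ha.trans (hf (left_mem_Icc.2 hab) hc hc.1), (hf hc (right_mem_Icc.2 hab) hc.2).trans hb⟩
  let g : Icc a b →o Icc a b := ⟨hmaps.restrict f _ _, fun c d hcd => hf c.2 d.2 hcd⟩
  exact ⟨g.lfp, g.lfp.2, congrArg Subtype.val g.isFixedPt_lfp⟩

theorem exists_pos_lt_sub_smul {n : ℕ} {x xs : Fin n → ℝ} (h : ∀ i, x i < xs i)
    (v : Fin n → ℝ) : ∃ δ > (0 : ℝ), ∀ i, x i < (xs - δ • v) i := by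
  have hlim : Tendsto (fun δ : ℝ => xs - δ • v) (𝓝 0) (𝓝 xs) := by
    simpa using tendsto_const_nhds.sub ((tendsto_id (x := 𝓝 (0 : ℝ))).smul_const v)
  have hev : ∀ᶠ δ in 𝓝 (0 : ℝ), ∀ i, x i < (xs - δ • v) i :=
    eventually_all.2 fun i => (tendsto_pi_nhds.1 hlim i).eventually (lt_mem_nhds (h i))
  obtain ⟨δ, hδ, hδpos⟩ :=
    ((hev.filter_mono nhdsWithin_le_nhds).and (self_mem_nhdsWithin (s := Ioi 0))).exists
  exact ⟨δ, hδpos, hδ⟩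

theorem OrderConcaveFnOn.apply_sub_smul_sub_le {n : ℕ} {f : (Fin n → ℝ) → Fin n → ℝ}
    {D : Set (Fin n → ℝ)} (hf : OrderConcaveFnOn f D) {xs z : Fin n → ℝ} {δ : ℝ}
    (hδ : 0 ≤ δ) (hfix : f xs = xs) (hz : z ∈ D) (hxsz : xs ≤ z) (hzf : z ≤ f z)
    (hu : xs - δ • (z - xs) ∈ D) : f (xs - δ • (z - xs)) ≤ xs - δ • (z - xs) := by
  set u := xs - δ • (z - xs) with hu_def
  set t : ℝ := (1 + δ)⁻¹ with ht_def
  have ht : 0 < t := by positivity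
  have ht1 : t ≤ 1 := inv_le_one_of_one_le₀ (by linarith)
  have hseg : t • u + (1 - t) • z = xs := by
    rw [hu_def, ht_def]
    match_scalars <;> field_simp <;> ring
  have huz : u ≤ z := (sub_le_self _ (smul_nonneg hδ (sub_nonneg.2 hxsz))).trans hxsz
  have hconc := hf.2 u hu z hz (Or.inl huz) t ht.le ht1
  rw [hseg, hfix] at hconc
  have : t • f u + (1 - t) • z ≤ t • u + (1 - t) • z :=
    calc t • f u + (1 - t) • z ≤ t • f u + (1 - t) • f z := by gcongr
      _ ≤ xs := hconc
      _ = t • u + (1 - t) • z := hseg.symm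
  exact (smul_le_smul_iff_of_pos_left ht).1 (le_of_add_le_add_right this)

/-- Let `f` be monotone and order-concave with upward closed
domain `D`, `x*` a fixpoint, `x` a pre-fixpoint with `x ≪ x*` such that the
least fixpoint of `f` above `x` is `x*`.  Then `x*` is the greatest
pre-fixpoint of `f`. -/
theorem feasible_fixpoint_is_greatest_prefixpoint {n : ℕ}
    (f : (Fin n → ℝ) → Fin n → ℝ) (D : Set (Fin n → ℝ))
    (hDup : ∀ a ∈ D, ∀ b, a ≤ b → b ∈ D)
    (hmono : ∀ a ∈ D, ∀ b ∈ D, a ≤ b → f a ≤ f b)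
    (hconc : OrderConcaveFnOn f D)
    (xs x : Fin n → ℝ) (hxs : xs ∈ D) (hx : x ∈ D)
    (hfix : f xs = xs) (hpre : x ≤ f x) (hll : ∀ i, x i < xs i)
    (hleast : ∀ z ∈ D, f z = z → x ≤ z → xs ≤ z) :
    ∀ y ∈ D, y ≤ f y → y ≤ xs := by
  intro y hy hyf
  set z := y ⊔ xs
  have hzD : z ∈ D := hDup xs hxs z le_sup_right
  have hzf : z ≤ f z := sup_le (hyf.trans (hmono y hy z hzD le_sup_left))
    (hfix ▸ hmono xs hxs z hzD le_sup_right)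
  suffices hzxs : z ≤ xs from le_sup_left.trans hzxs
  obtain ⟨δ, hδ, hxu_lt⟩ := exists_pos_lt_sub_smul hll (z - xs)
  set u := xs - δ • (z - xs)
  have hxu : x ≤ u := fun i => (hxu_lt i).le
  have huD : u ∈ D := hDup x hx u hxu
  have hfu : f u ≤ u := hconc.apply_sub_smul_sub_le hδ.le hfix hzD le_sup_right hzf huD
  have hmonoOn : MonotoneOn f (Icc x u) := fun a ha b hb hab =>
    hmono a (hDup x hx a ha.1) b (hDup x hx b hb.1) hab
  obtain ⟨p, ⟨hxp, hpu⟩, hp⟩ := exists_isFixedPt_mem_Icc_of_monotoneOn hxu hmonoOn hpre hfu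
  have hxsu : xs ≤ u := (hleast p (hDup x hx p hxp) hp hxp).trans hpu
  have hδz : δ • (z - xs) ≤ 0 := (le_sub_self_iff xs).1 hxsu
  exact sub_nonpos.1 ((smul_le_smul_iff_of_pos_left hδ).1 (by rwa [smul_zero]))
end

section
/- Let f : (X → ℝ̄) → (X → ℝ̄) be upward-chain-continuous and monotone on the set of variable assignments ≥ ρ, where ρ : X → ℝ is a pre-fixpoint of f (ρ ≤ f(ρ)) and all Kleene iterates fᵏ(ρ) stay real-valued. Then the least fixpoint of f above ρ equals the supremum of the Kleene iteration: μ_{≥ρ} f = ⋁_{k∈ℕ} fᵏ(ρ), and consequently for each variable x, (μ_{≥ρ} f)(x) ≤ sup{ρ̂(x) | ρ̂ : X → ℝ, ρ̂ ≤ f(ρ̂)}. -/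
/-- Coercion of a real-valued variable assignment to an extended-real one. -/
noncomputable def coer {X : Type*} (ρ : X → ℝ) : X → EReal := fun x => (ρ x : EReal)

/-!
Monotonicity on `Set.Ici ρ` makes the Kleene iterates `fᵏ(ρ)` an ascending chain above `ρ`
lying below every fixpoint above `ρ`; chain continuity turns their supremum into a fixpoint,
which is therefore the least one. Each iterate is itself a real-valued pre-fixpoint, which
gives the componentwise bound.
-/

open Set

namespace MonotoneOn

section Preorder

variable {α : Type*} [Preorder α] {f : α → α} {a : α}

theorem le_iterate (hf : MonotoneOn f (Ici a)) (ha : a ≤ f a) : ∀ k : ℕ, a ≤ f^[k] a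
  | 0 => le_rfl
  | k + 1 => by
    rw [Function.iterate_succ_apply']
    exact ha.trans (hf le_rfl (hf.le_iterate ha k) (hf.le_iterate ha k))

theorem iterate_le_map_iterate (hf : MonotoneOn f (Ici a)) (ha : a ≤ f a) :
    ∀ k : ℕ, f^[k] a ≤ f (f^[k] a)
  | 0 => ha
  | k + 1 => by
    rw [Function.iterate_succ_apply']
    exact hf (hf.le_iterate ha k) ((hf.le_iterate ha k).trans (hf.iterate_le_map_iterate ha k))
      (hf.iterate_le_map_iterate ha k)

theorem monotone_iterate (hf : MonotoneOn f (Ici a)) (ha : a ≤ f a) :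
    Monotone fun k : ℕ => f^[k] a :=
  monotone_nat_of_le_succ fun k => by
    simpa only [Function.iterate_succ_apply'] using hf.iterate_le_map_iterate ha k

theorem iterate_le_of_map_le (hf : MonotoneOn f (Ici a)) (ha : a ≤ f a) {b : α}
    (hab : a ≤ b) (hb : f b ≤ b) : ∀ k : ℕ, f^[k] a ≤ b
  | 0 => hab
  | k + 1 => by
    rw [Function.iterate_succ_apply']
    exact (hf (hf.le_iterate ha k) hab (hf.iterate_le_of_map_le ha hab hb k)).trans hb

end Preorder

section CompleteLattice

variable {α : Type*} [CompleteLattice α] {f : α → α} {a : α}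

theorem map_iSup_iterate (hf : MonotoneOn f (Ici a)) (ha : a ≤ f a)
    (hcont : ∀ C : Set α, C.Nonempty → IsChain (· ≤ ·) C → C ⊆ Ici a →
      f (sSup C) = sSup (f '' C)) :
    f (⨆ k : ℕ, f^[k] a) = ⨆ k : ℕ, f^[k] a := by
  have hchain := (hf.monotone_iterate ha).isChain_range
  have hle : range (fun k : ℕ => f^[k] a) ⊆ Ici a := by
    rintro _ ⟨k, rfl⟩
    exact hf.le_iterate ha k
  calc f (⨆ k : ℕ, f^[k] a)
      = ⨆ k : ℕ, f (f^[k] a) := by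
        rw [← sSup_range, hcont _ (range_nonempty _) hchain hle, ← range_comp, sSup_range]
        rfl
    _ = ⨆ k : ℕ, f^[k + 1] a := by simp only [Function.iterate_succ_apply']
    _ = ⨆ k : ℕ, f^[k] a := (hf.monotone_iterate ha).iSup_nat_add 1

theorem isLeast_iSup_iterate (hf : MonotoneOn f (Ici a)) (ha : a ≤ f a)
    (hcont : ∀ C : Set α, C.Nonempty → IsChain (· ≤ ·) C → C ⊆ Ici a →
      f (sSup C) = sSup (f '' C)) :
    IsLeast {b | a ≤ b ∧ f b = b} (⨆ k : ℕ, f^[k] a) :=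
  ⟨⟨le_iSup_of_le 0 le_rfl, hf.map_iSup_iterate ha hcont⟩,
    fun _ hb => iSup_le (hf.iterate_le_of_map_le ha hb.1 hb.2.le)⟩

end CompleteLattice

end MonotoneOn

theorem kleene_least_fixpoint_general {X : Type*}
    (f : (X → EReal) → (X → EReal)) (ρ : X → ℝ)
    (hmono : ∀ a b : X → EReal, coer ρ ≤ a → coer ρ ≤ b → a ≤ b → f a ≤ f b)
    (hcont : ∀ C : Set (X → EReal), C.Nonempty → IsChain (· ≤ ·) C →
      (∀ c ∈ C, coer ρ ≤ c) → f (sSup C) = sSup (f '' C))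
    (hpre : coer ρ ≤ f (coer ρ))
    (hreal : ∀ k : ℕ, ∃ r : X → ℝ, f^[k] (coer ρ) = coer r)
    (μ : X → EReal) (hμfix : f μ = μ) (hμge : coer ρ ≤ μ)
    (hμleast : ∀ τ : X → EReal, coer ρ ≤ τ → f τ = τ → μ ≤ τ) :
    μ = ⨆ k : ℕ, f^[k] (coer ρ) ∧
    ∀ x : X, μ x ≤ sSup {v : EReal |
      ∃ σ : X → ℝ, coer σ ≤ f (coer σ) ∧ v = ((σ x : ℝ) : EReal)} := by
  have hf : MonotoneOn f (Ici (coer ρ)) := fun a ha b hb hab => hmono a b ha hb hab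
  have hμ : μ = ⨆ k : ℕ, f^[k] (coer ρ) :=
    ((hf.isLeast_iSup_iterate hpre hcont).unique
      ⟨⟨hμge, hμfix⟩, fun τ hτ => hμleast τ hτ.1 hτ.2⟩).symm
  refine ⟨hμ, fun x => ?_⟩
  rw [hμ, iSup_apply]
  refine iSup_le fun k => ?_
  obtain ⟨r, hr⟩ := hreal k
  apply le_sSup
  refine ⟨r, ?_, by rw [hr]; rfl⟩
  rw [← hr]
  exact hf.iterate_le_map_iterate hpre k

/-- For `f` monotone and upward-chain-continuous on the
assignments `≥ ρ`, where `ρ` is a real-valued pre-fixpoint whose Kleene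
iterates stay real-valued, the least fixpoint `μ` of `f` above `ρ` equals the
supremum of the Kleene iteration, and hence each of its components is bounded
by the supremum over all real-valued pre-fixpoints. -/
theorem kleene_least_fixpoint {X : Type*} [Fintype X]
    (f : (X → EReal) → (X → EReal)) (ρ : X → ℝ)
    (hmono : ∀ a b : X → EReal, coer ρ ≤ a → coer ρ ≤ b → a ≤ b → f a ≤ f b)
    (hcont : ∀ C : Set (X → EReal), C.Nonempty → IsChain (· ≤ ·) C →
      (∀ c ∈ C, coer ρ ≤ c) → f (sSup C) = sSup (f '' C))
    (hpre : coer ρ ≤ f (coer ρ))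
    (hreal : ∀ k : ℕ, ∃ r : X → ℝ, f^[k] (coer ρ) = coer r)
    (μ : X → EReal) (hμfix : f μ = μ) (hμge : coer ρ ≤ μ)
    (hμleast : ∀ τ : X → EReal, coer ρ ≤ τ → f τ = τ → μ ≤ τ) :
    μ = ⨆ k : ℕ, f^[k] (coer ρ) ∧
    ∀ x : X, μ x ≤ sSup {v : EReal |
      ∃ σ : X → ℝ, coer σ ≤ f (coer σ) ∧ v = ((σ x : ℝ) : EReal)} :=
  kleene_least_fixpoint_general f ρ hmono hcont hpre hreal μ hμfix hμge hμleast
end
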